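/- Edmonds' greedy vector lies in the polymatroid and is tight along the chain: let f : 2^V → ℝ be normalized nondecreasing submodular, let (v₁,…,v_n) be any ordering of V, L(h) = {v₁,…,v_h}, and define w_{v_h} = f(L(h)) − f(L(h−1)). Then w ≥ 0, w(S) ≤ f(S) for all S ⊆ V (i.e., w ∈ P(f)), and w(L(h)) = f(L(h)) for all h = 0,1,…,n. -/

import Mathlib

/-! Adding the elements in the order `v` makes `w(L h)` telescope to `f(L h)`, and `w ≥ 0` is
monotonicity of `f`. For `w(S) ≤ f(S)`, induct on `S` by adding its element `a` of largest rank: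
every earlier element of `S` lies in the prefix `L (rank a)`, so by diminishing returns the gain
`w a` of adding `a` to that prefix is at most the gain of adding `a` to the rest of `S`. -/

open Finset Function

variable {α β : Type*}

section Submodular

variable [DecidableEq α] [AddCommGroup β] [PartialOrder β] [IsOrderedAddMonoid β]

def IsSubmodular (f : Finset α → β) : Prop :=
  ∀ S T, f (S ∪ T) + f (S ∩ T) ≤ f S + f T

theorem IsSubmodular.insert_sub_le_insert_sub {f : Finset α → β} (hf : IsSubmodular f)
    {A B : Finset α} {x : α} (hAB : A ⊆ B) (hx : x ∉ B) :
    f (insert x B) - f B ≤ f (insert x A) - f A := by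
  have key := hf (insert x A) B
  rw [insert_union, union_eq_right.mpr hAB, insert_inter_of_notMem hx,
    inter_eq_left.mpr hAB] at key
  rw [sub_le_sub_iff]
  simpa only [add_comm] using key

end Submodular

section Greedy

variable [Fintype α] (r : α → ℕ)

def rankPrefix (h : ℕ) : Finset α := univ.filter fun i => r i < h

def greedyVector [AddCommGroup β] (f : Finset α → β) (i : α) : β :=
  f (rankPrefix r (r i + 1)) - f (rankPrefix r (r i))

variable {r}

@[simp]
theorem mem_rankPrefix {h : ℕ} {i : α} : i ∈ rankPrefix r h ↔ r i < h := by
  simp [rankPrefix]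

theorem rankPrefix_zero : rankPrefix r 0 = ∅ := by
  ext; simp

theorem rankPrefix_mono {h k : ℕ} (hhk : h ≤ k) : rankPrefix r h ⊆ rankPrefix r k :=
  fun i hi => by simp only [mem_rankPrefix] at hi ⊢; omega

theorem self_notMem_rankPrefix (x : α) : x ∉ rankPrefix r (r x) := by
  simp

theorem rankPrefix_succ_of_rank_eq [DecidableEq α] (hr : Injective r) {x : α} {h : ℕ}
    (hx : r x = h) :
    rankPrefix r (h + 1) = insert x (rankPrefix r h) := by
  ext i
  simp only [mem_rankPrefix, mem_insert, Nat.lt_succ_iff_lt_or_eq]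
  constructor
  · rintro (hi | hi)
    · exact Or.inr hi
    · exact Or.inl (hr (hi.trans hx.symm))
  · rintro (rfl | hi)
    · exact Or.inr hx
    · exact Or.inl hi

theorem rankPrefix_succ_of_forall_ne {h : ℕ} (hh : ∀ x, r x ≠ h) :
    rankPrefix r (h + 1) = rankPrefix r h := by
  ext i
  simp only [mem_rankPrefix, Nat.lt_succ_iff_lt_or_eq, or_iff_left (hh i)]

theorem greedyVector_nonneg [AddCommGroup β] [PartialOrder β] [IsOrderedAddMonoid β]
    {f : Finset α → β} (hf : Monotone f) (i : α) :
    0 ≤ greedyVector r f i :=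
  sub_nonneg.mpr (hf (rankPrefix_mono (Nat.le_succ _)))

theorem sum_greedyVector_rankPrefix [DecidableEq α] [AddCommGroup β] (hr : Injective r)
    (f : Finset α → β) (h : ℕ) :
    ∑ i ∈ rankPrefix r h, greedyVector r f i = f (rankPrefix r h) - f ∅ := by
  induction h with
  | zero => simp [rankPrefix_zero]
  | succ h ih =>
    by_cases hh : ∃ x, r x = h
    · obtain ⟨x, rfl⟩ := hh
      rw [rankPrefix_succ_of_rank_eq hr rfl, sum_insert (self_notMem_rankPrefix x), ih,
        greedyVector, rankPrefix_succ_of_rank_eq hr rfl, sub_add_sub_cancel]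
    · rw [rankPrefix_succ_of_forall_ne (not_exists.mp hh), ih]

theorem sum_greedyVector_le [DecidableEq α] [AddCommGroup β] [PartialOrder β]
    [IsOrderedAddMonoid β] (hr : Injective r) {f : Finset α → β} (hf : IsSubmodular f)
    (S : Finset α) : ∑ i ∈ S, greedyVector r f i ≤ f S - f ∅ := by
  induction S using induction_on_max_value r with
  | empty => simp
  | insert a S haS hmax ih =>
    have hS : S ⊆ rankPrefix r (r a) := fun x hx =>
      mem_rankPrefix.mpr ((hmax x hx).lt_of_ne fun hxa => haS (hr hxa ▸ hx))
    have hgain : greedyVector r f a ≤ f (insert a S) - f S := by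
      rw [greedyVector, rankPrefix_succ_of_rank_eq hr rfl]
      exact hf.insert_sub_le_insert_sub hS (self_notMem_rankPrefix a)
    calc ∑ i ∈ insert a S, greedyVector r f i
        = greedyVector r f a + ∑ i ∈ S, greedyVector r f i := sum_insert haS
      _ ≤ (f (insert a S) - f S) + (f S - f ∅) := add_le_add hgain ih
      _ = f (insert a S) - f ∅ := sub_add_sub_cancel _ _ _

end Greedy

/-- Edmonds' greedy vector lies in the polymatroid and is tight along the chain:
for any ordering `v` of the ground set, with `L(h)` the first `h` elements and
`w_{v_h} = f(L(h)) − f(L(h−1))`, one has `w ≥ 0`, `w(S) ≤ f(S)` for all `S`, and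
`w(L(h)) = f(L(h))` for all `h ≤ n`. -/
theorem edmonds_greedy_vector {n : ℕ} (f : Finset (Fin n) → ℝ)
    (hnorm : f ∅ = 0)
    (hmono : ∀ S T : Finset (Fin n), S ⊆ T → f S ≤ f T)
    (hsubmod : ∀ S T : Finset (Fin n), f (S ∪ T) + f (S ∩ T) ≤ f S + f T)
    (v : Equiv.Perm (Fin n))
    (L : ℕ → Finset (Fin n))
    (hL : ∀ h : ℕ, L h = Finset.univ.filter (fun i => ((v.symm i : Fin n) : ℕ) < h))
    (w : Fin n → ℝ)
    (hw : ∀ i : Fin n, w i = f (L (((v.symm i : Fin n) : ℕ) + 1)) - f (L ((v.symm i : Fin n) : ℕ))) :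
    (∀ i, 0 ≤ w i) ∧
    (∀ S : Finset (Fin n), ∑ i ∈ S, w i ≤ f S) ∧
    (∀ h : ℕ, h ≤ n → ∑ i ∈ L h, w i = f (L h)) := by
  set r : Fin n → ℕ := fun i => v.symm i
  have hr : Injective r := Fin.val_injective.comp v.symm.injective
  obtain rfl : L = rankPrefix r := funext hL
  obtain rfl : w = greedyVector r f := funext hw
  refine ⟨greedyVector_nonneg (fun S T => hmono S T), fun S => ?_, fun h _ => ?_⟩
  · simpa [hnorm] using sum_greedyVector_le hr hsubmod S
  · simpa [hnorm] using sum_greedyVector_rankPrefix hr f h
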